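/- arXiv:hep-th/9311171 — 6 statements merged into one kernel-verified Lean document; each statement's English description precedes it below -/
import Mathlib

section
/- For all i ≠ j in {0, …, l}, the derivations Q_i of π₀ satisfy the Serre relations of the affine Kac–Moody algebra with Cartan matrix A: the iterated commutator (ad Q_i)^{-a_{ij}+1}(Q_j) = [Q_i, [Q_i, …, [Q_i, Q_j] …]] (with Q_i appearing -a_{ij}+1 times) vanishes in the Lie algebra of ℂ-derivations of π₀. -/
open MvPolynomial

noncomputable section

/-- The algebra of differential polynomials in the variables `u_i^{(n)}`, `1 ≤ i ≤ l`, `n ≥ 0`. -/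
abbrev Pi0 (l : ℕ) : Type := MvPolynomial (Fin l × ℕ) ℂ

/-- The variable `u_i^{(n)}`. -/
def u {l : ℕ} (i : Fin l) (n : ℕ) : Pi0 l := X (i, n)

/-- The derivation `∂` with `∂ u_i^{(n)} = u_i^{(n+1)}`. -/
def pa (l : ℕ) : Derivation ℂ (Pi0 l) (Pi0 l) :=
  mkDerivation ℂ (fun p => X (p.1, p.2 + 1))

/-- An affine generalized Cartan matrix of size `(l+1) × (l+1)`: an indecomposable integer
matrix with `a_{ii} = 2`, `a_{ij} ≤ 0` for `i ≠ j`, `a_{ij} = 0 ↔ a_{ji} = 0`, symmetrizable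
by positive rationals `d_i`, and admitting a vector of positive integer labels `(a_0,…,a_l)`
with `∑_j a_j a_{ij} = 0` for all `i`. -/
structure AffineGCM (l : ℕ) where
  A : Matrix (Fin (l+1)) (Fin (l+1)) ℤ
  diag : ∀ i, A i i = 2
  offdiag : ∀ i j, i ≠ j → A i j ≤ 0
  zeroIff : ∀ i j, A i j = 0 ↔ A j i = 0
  d : Fin (l+1) → ℚ
  d_pos : ∀ i, 0 < d i
  dsymm : ∀ i j, d i * A i j = d j * A j i
  label : Fin (l+1) → ℕ
  label_pos : ∀ i, 0 < label i
  null : ∀ i, ∑ j, (label j : ℤ) * A i j = 0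
  indec : ∀ S : Set (Fin (l+1)), (∀ i ∈ S, ∀ j ∉ S, A i j = 0) → S = ∅ ∨ S = Set.univ

namespace AffineGCM

variable {l : ℕ} (K : AffineGCM l)

/-- The symmetrized bilinear form `(α_i, α_j) := d_i a_{ij}`. -/
def B (i j : Fin (l+1)) : ℂ := (K.d i : ℂ) * (K.A i j : ℂ)

/-- `u_j^{(n)}` for `j = 0,…,l`, where `u_0^{(n)} := -(1/a_0) ∑_{i=1}^l a_i u_i^{(n)}`.
Here `j = 0` is `Fin.cases`' zero case and `j = i.succ` corresponds to `u_i^{(n)}`. -/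
def Uv (j : Fin (l+1)) (n : ℕ) : Pi0 l :=
  Fin.cases (-(1 / (K.label 0 : ℂ)) • ∑ i : Fin l, (K.label i.succ : ℂ) • u i n)
    (fun i => u i n) j

/-- The Faà di Bruno polynomials: `B_i^{(0)} = 1`,
`B_i^{(n+1)} = -u_i^{(0)} B_i^{(n)} + ∂ B_i^{(n)}`. -/
def FdB (i : Fin (l+1)) : ℕ → Pi0 l
  | 0 => 1
  | n+1 => -(K.Uv i 0) * FdB i n + pa l (FdB i n)

/-- The unique `ℂ`-derivation `Q_i` of `π₀` with `Q_i u_j^{(n)} = -(α_i,α_j) B_i^{(n)}`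
for `1 ≤ j ≤ l`, `n ≥ 0`. -/
def Q (i : Fin (l+1)) : Derivation ℂ (Pi0 l) (Pi0 l) :=
  mkDerivation ℂ (fun p => -(K.B i p.1.succ) • K.FdB i p.2)

end AffineGCM


/-!
Write `u_k(z) = ∑ u_k^{(n)} zⁿ/n!` and `B_k(z) = ∑ B_k^{(n)} zⁿ/n!`, with `∂` acting
coefficientwise. Then `u_k' = ∂ u_k` and `B_k' = ∂ B_k - u_k^{(0)} B_k`, so formally
`B_k = exp (-∫ u_k)` and every derivation acts by `D B_k = -B_k ∫ D u_k`. A derivation of `π₀` is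
determined by the series `D u_k(z)`. For `Q_i` this series is `-(α_i, α_k) B_i`, hence
`Q_i B_k = (α_i, α_k) B_k I` with `I = ∫ B_i`.

By induction, `(ad Q_i)^{m+1} Q_j` sends `u_k(z)` to `-((α_i, α_k) P_m + (α_j, α_k) R_m)` with
`R_m = λ_{m+1} B_j I^{m+1}` and `P_m = -(m+1) λ_{m+1} B_i ∫ B_j I^m`, where
`λ_m = ∏_{r < m} ((α_i, α_j) + r (α_i, α_i)/2)`. The factor for `r = -a_{ij}` is
`d_i (a_{ij} + r) = 0`.
-/

theorem inv_succ_smul_mul_succ {A : Type*} [CommRing A] [Algebra ℚ A] (x : A) (n : ℕ) :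
    (n + 1 : ℚ)⁻¹ • (x * (n + 1)) = x := by
  rw [mul_comm, show (n + 1 : A) = algebraMap ℚ A (n + 1) by simp, ← Algebra.smul_def, smul_smul,
    inv_mul_cancel₀ (by positivity), one_smul]

namespace PowerSeries

section MapDerivation

variable {R A : Type*} [CommRing R] [CommRing A] [Algebra R A]

noncomputable def _root_.Derivation.mapPowerSeries (D : Derivation R A A) :
    Derivation R A⟦X⟧ A⟦X⟧ :=
  Derivation.mk'
    { toFun F := mk fun n => D (coeff n F)
      map_add' F G := by ext n; simp
      map_smul' r F := by ext n; simp }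
    fun F G => by
      rw [smul_eq_mul, smul_eq_mul, mul_comm G]
      ext n
      simp only [LinearMap.coe_mk, AddHom.coe_mk, coeff_mk, coeff_mul, smul_eq_mul, map_add,
        map_sum, Derivation.leibniz, Finset.sum_add_distrib, mul_comm (coeff _ G)]

@[simp] theorem _root_.Derivation.coeff_mapPowerSeries (D : Derivation R A A) (F : A⟦X⟧)
    (n : ℕ) : coeff n (D.mapPowerSeries F) = D (coeff n F) := by
  simp [Derivation.mapPowerSeries]

@[simp] theorem _root_.Derivation.constantCoeff_mapPowerSeries (D : Derivation R A A)
    (F : A⟦X⟧) : constantCoeff (D.mapPowerSeries F) = D (constantCoeff F) := by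
  rw [← coeff_zero_eq_constantCoeff_apply, Derivation.coeff_mapPowerSeries,
    coeff_zero_eq_constantCoeff_apply]

@[simp] theorem _root_.Derivation.mapPowerSeries_C (D : Derivation R A A) (a : A) :
    D.mapPowerSeries (C a) = C (D a) := by
  ext n
  rw [Derivation.coeff_mapPowerSeries, coeff_C, coeff_C]
  split_ifs <;> simp

theorem _root_.Derivation.derivative_mapPowerSeries (D : Derivation R A A) (F : A⟦X⟧) :
    d⁄dX A (D.mapPowerSeries F) = D.mapPowerSeries (d⁄dX A F) := by
  ext n
  rw [coeff_derivative, Derivation.coeff_mapPowerSeries, Derivation.coeff_mapPowerSeries,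
    coeff_derivative, ← Nat.cast_succ, ← nsmul_eq_mul', ← nsmul_eq_mul', map_nsmul]

theorem _root_.Derivation.mapPowerSeries_commutator (D₁ D₂ : Derivation R A A) :
    ⁅D₁, D₂⁆.mapPowerSeries = ⁅D₁.mapPowerSeries, D₂.mapPowerSeries⁆ := by
  ext F n
  simp [Derivation.commutator_apply]

end MapDerivation

variable {A : Type*} [CommRing A] [Algebra ℚ A]

theorem coeff_succ_eq_smul_coeff_derivative (F : A⟦X⟧) (n : ℕ) :
    coeff (n + 1) F = (n + 1 : ℚ)⁻¹ • coeff n (d⁄dX A F) := by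
  rw [coeff_derivative, inv_succ_smul_mul_succ]

noncomputable def integral : A⟦X⟧ →ₗ[ℚ] A⟦X⟧ where
  toFun F := X * mk fun n => (n + 1 : ℚ)⁻¹ • coeff n F
  map_add' F G := by ext (_ | n) <;> simp [smul_add]
  map_smul' q F := by ext (_ | n) <;> simp [smul_comm q]

@[simp] theorem constantCoeff_integral (F : A⟦X⟧) : constantCoeff (integral F) = 0 := by
  simp [integral]

theorem coeff_succ_integral (F : A⟦X⟧) (n : ℕ) :
    coeff (n + 1) (integral F) = (n + 1 : ℚ)⁻¹ • coeff n F := by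
  simp [integral]

@[simp] theorem derivative_integral (F : A⟦X⟧) : d⁄dX A (integral F) = F := by
  ext n
  rw [coeff_derivative, coeff_succ_integral, smul_mul_assoc, inv_succ_smul_mul_succ]

theorem integral_derivative (F : A⟦X⟧) : integral (d⁄dX A F) = F - C (constantCoeff F) := by
  ext (_ | n)
  · simp
  · rw [coeff_succ_integral, ← coeff_succ_eq_smul_coeff_derivative, map_sub, coeff_C,
      if_neg n.succ_ne_zero, sub_zero]

theorem integral_derivative_mul (F G : A⟦X⟧) :
    integral (d⁄dX A F * G) = F * G - C (constantCoeff (F * G)) - integral (F * d⁄dX A G) := by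
  rw [eq_sub_iff_add_eq, ← map_add, ← integral_derivative, Derivation.leibniz, smul_eq_mul,
    smul_eq_mul, add_comm, mul_comm G]

noncomputable def egf (f : ℕ → A) : A⟦X⟧ := mk fun n => (n.factorial : ℚ)⁻¹ • f n

@[simp] theorem coeff_egf (f : ℕ → A) (n : ℕ) :
    coeff n (egf f) = (n.factorial : ℚ)⁻¹ • f n :=
  coeff_mk _ _

@[simp] theorem constantCoeff_egf (f : ℕ → A) : constantCoeff (egf f) = f 0 := by
  simp [← coeff_zero_eq_constantCoeff_apply]

theorem derivative_egf (f : ℕ → A) : d⁄dX A (egf f) = egf fun n => f (n + 1) := by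
  ext n
  rw [coeff_derivative, coeff_egf, coeff_egf, Nat.factorial_succ, Nat.cast_mul, mul_inv_rev,
    mul_smul, smul_mul_assoc, smul_mul_assoc, Nat.cast_succ, inv_succ_smul_mul_succ]

theorem egf_eq_zero_iff {f : ℕ → A} : egf f = 0 ↔ f = 0 := by
  refine ⟨fun h => funext fun n => ?_, fun h => by ext n; simp [h]⟩
  simpa [n.factorial_ne_zero] using congr(coeff n $h)

variable {R : Type*} [CommRing R] [Algebra R A]

theorem integral_smul (r : R) (F : A⟦X⟧) : integral (r • F) = r • integral F := by
  ext (_ | n)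
  · simp
  · simp only [coeff_succ_integral, coeff_smul, smul_comm r]

theorem egf_smul (r : R) (f : ℕ → A) : (egf fun n => r • f n) = r • egf f := by
  ext n
  rw [coeff_egf, coeff_smul, coeff_egf, smul_comm]

theorem _root_.Derivation.mapPowerSeries_integral (D : Derivation R A A) (F : A⟦X⟧) :
    D.mapPowerSeries (integral F) = integral (D.mapPowerSeries F) := by
  ext (_ | n)
  · simp
  · simp only [Derivation.coeff_mapPowerSeries, coeff_succ_integral, map_rat_smul]

theorem _root_.Derivation.mapPowerSeries_egf (D : Derivation R A A) (f : ℕ → A) :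
    D.mapPowerSeries (egf f) = egf fun n => D (f n) := by
  ext n
  simp [map_rat_smul]

/-- The hypotheses say that formally `B = exp (-∫ U)`. -/
theorem _root_.Derivation.mapPowerSeries_eq_neg_mul_integral (δ : Derivation R A A)
    {U B : A⟦X⟧} (hU : d⁄dX A U = δ.mapPowerSeries U)
    (hB : d⁄dX A B = δ.mapPowerSeries B - C (constantCoeff U) * B) (hB₀ : constantCoeff B = 1)
    (D : Derivation R A A) : D.mapPowerSeries B = -(B * integral (D.mapPowerSeries U)) := by
  set W : Derivation R A A → A⟦X⟧ :=
    fun D => D.mapPowerSeries B + B * integral (D.mapPowerSeries U)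
  -- the defect `W D` satisfies a linear ODE whose inhomogeneity is the defect of `⁅D, δ⁆`,
  -- so its coefficients vanish by induction, simultaneously for all `D`
  have hW : ∀ D, d⁄dX A (W D) =
      δ.mapPowerSeries (W D) - C (constantCoeff U) * W D + W ⁅D, δ⁆ := by
    intro D
    have hDU : integral (D.mapPowerSeries (δ.mapPowerSeries U)) =
        D.mapPowerSeries U - C (D (constantCoeff U)) := by
      rw [← hU, ← Derivation.derivative_mapPowerSeries, integral_derivative,
        Derivation.constantCoeff_mapPowerSeries]
    simp only [W, map_add, map_sub, Derivation.leibniz, smul_eq_mul,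
      Derivation.derivative_mapPowerSeries, derivative_integral, hB, Derivation.mapPowerSeries_C,
      Derivation.mapPowerSeries_commutator, Derivation.commutator_apply, hDU,
      Derivation.mapPowerSeries_integral]
    ring
  have hcoeff : ∀ n D, coeff n (W D) = 0 := by
    intro n
    induction n with
    | zero => intro D; simp [W, hB₀]
    | succ n ih => intro D; simp [coeff_succ_eq_smul_coeff_derivative, hW, ih]
  rw [eq_neg_iff_add_eq_zero]
  ext n
  rw [map_zero]
  exact hcoeff n D

end PowerSeries

namespace AffineGCM

open scoped PowerSeries
open PowerSeries (egf integral)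

variable {l : ℕ} (K : AffineGCM l)

theorem B_comm (i j : Fin (l+1)) : K.B i j = K.B j i := by
  simp only [B]
  exact_mod_cast K.dsymm i j

theorem sum_label_mul_B_succ (r : Fin (l+1)) :
    ∑ t : Fin l, (K.label t.succ : ℂ) * K.B r t.succ = -(K.label 0 * K.B r 0) := by
  have h : ∑ t, (K.label t : ℂ) * K.B r t = 0 := by
    have := congr(((K.d r : ℚ) : ℂ) * ($(K.null r) : ℂ))
    push_cast at this
    simpa only [B, Finset.mul_sum, mul_left_comm, mul_zero] using this
  rw [Fin.sum_univ_succ] at h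
  linear_combination h

theorem pa_Uv (k : Fin (l+1)) (n : ℕ) : pa l (K.Uv k n) = K.Uv k (n + 1) := by
  cases k using Fin.cases <;> simp [Uv, u, pa, mkDerivation_X, map_sum]

def uSeries (k : Fin (l+1)) : (Pi0 l)⟦X⟧ := egf (K.Uv k)

def fdbSeries (k : Fin (l+1)) : (Pi0 l)⟦X⟧ := egf (K.FdB k)

theorem uSeries_zero : K.uSeries 0 =
    -(1 / (K.label 0 : ℂ)) • ∑ t : Fin l, (K.label t.succ : ℂ) • K.uSeries t.succ := by
  ext n
  simp [uSeries, Uv, Finset.smul_sum, smul_comm ((n.factorial : ℚ)⁻¹)]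

theorem mapPowerSeries_fdbSeries (D : Derivation ℂ (Pi0 l) (Pi0 l)) (k : Fin (l+1)) :
    D.mapPowerSeries (K.fdbSeries k) =
      -(K.fdbSeries k * integral (D.mapPowerSeries (K.uSeries k))) := by
  refine (pa l).mapPowerSeries_eq_neg_mul_integral ?_ ?_ ?_ D
  · simp [uSeries, PowerSeries.derivative_egf, Derivation.mapPowerSeries_egf, pa_Uv]
  · ext n
    simp [fdbSeries, uSeries, PowerSeries.derivative_egf, FdB, PowerSeries.coeff_C_mul,
      map_rat_smul]
    ring
  · simp [fdbSeries, FdB]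

def HasSymbol (i j : Fin (l+1)) (D : Derivation ℂ (Pi0 l) (Pi0 l)) (P R : (Pi0 l)⟦X⟧) : Prop :=
  ∀ k, D.mapPowerSeries (K.uSeries k) = -(K.B i k • P + K.B j k • R)

variable {K}

/-- At `k = 0` the symbol is forced by the null vector `(a_0, …, a_l)` of the Cartan matrix. -/
theorem hasSymbol_of_forall_succ {i j : Fin (l+1)} {D : Derivation ℂ (Pi0 l) (Pi0 l)}
    {P R : (Pi0 l)⟦X⟧} (h : ∀ t : Fin l,
      D.mapPowerSeries (K.uSeries t.succ) = -(K.B i t.succ • P + K.B j t.succ • R)) :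
    K.HasSymbol i j D P R := by
  intro k
  cases k using Fin.cases with
  | succ t => exact h t
  | zero =>
    have hne : (K.label 0 : ℂ) ≠ 0 := Nat.cast_ne_zero.mpr (K.label_pos 0).ne'
    rw [uSeries_zero, Derivation.map_smul, map_sum]
    simp only [Derivation.map_smul, h, smul_neg, smul_add, smul_smul, Finset.sum_neg_distrib,
      Finset.sum_add_distrib, ← Finset.sum_smul, sum_label_mul_B_succ]
    match_scalars <;> field_simp

theorem HasSymbol.eq_zero {i j : Fin (l+1)} {D : Derivation ℂ (Pi0 l) (Pi0 l)}
    (h : K.HasSymbol i j D 0 0) : D = 0 := by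
  refine MvPolynomial.derivation_ext fun ⟨t, n⟩ => ?_
  have ht : (egf fun n => D (X (t, n))) = 0 := by
    simpa [uSeries, Derivation.mapPowerSeries_egf, Uv, u] using h t.succ
  simpa using congr_fun (PowerSeries.egf_eq_zero_iff.mp ht) n

variable (K)

theorem mapPowerSeries_Q_uSeries (r k : Fin (l+1)) :
    (K.Q r).mapPowerSeries (K.uSeries k) = -(K.B r k • K.fdbSeries r) := by
  have : K.HasSymbol r r (K.Q r) (K.fdbSeries r) 0 := hasSymbol_of_forall_succ fun t => by
    simp [uSeries, fdbSeries, Derivation.mapPowerSeries_egf, Uv, u, Q, mkDerivation_X,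
      ← neg_smul, PowerSeries.egf_smul]
  simpa using this k

theorem hasSymbol_Q_right (i j : Fin (l+1)) : K.HasSymbol i j (K.Q j) 0 (K.fdbSeries j) := by
  intro k
  simp [mapPowerSeries_Q_uSeries]

variable {K}

theorem HasSymbol.commutator_Q {i j : Fin (l+1)} {D : Derivation ℂ (Pi0 l) (Pi0 l)}
    {P R : (Pi0 l)⟦X⟧} (h : K.HasSymbol i j D P R) :
    K.HasSymbol i j ⁅K.Q i, D⁆
      ((K.Q i).mapPowerSeries P - K.fdbSeries i * integral (K.B i i • P + K.B i j • R))
      ((K.Q i).mapPowerSeries R) := by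
  intro k
  simp only [Derivation.mapPowerSeries_commutator, Derivation.commutator_apply, h k,
    mapPowerSeries_Q_uSeries, map_neg, map_add, Derivation.map_smul, mapPowerSeries_fdbSeries,
    h i, K.B_comm j i, PowerSeries.integral_smul]
  simp only [Algebra.smul_def]
  ring

variable (K)

def fdbIntegral (i : Fin (l+1)) : (Pi0 l)⟦X⟧ := integral (K.fdbSeries i)

def serreSeries (i j : Fin (l+1)) (m : ℕ) : (Pi0 l)⟦X⟧ :=
  integral (K.fdbSeries j * K.fdbIntegral i ^ m)

def serreCoeff (i j : Fin (l+1)) (m : ℕ) : ℂ :=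
  ∏ r ∈ Finset.range m, (K.B i j + r * (K.B i i / 2))

theorem serreCoeff_succ (i j : Fin (l+1)) (m : ℕ) :
    K.serreCoeff i j (m + 1) = K.serreCoeff i j m * (K.B i j + m * (K.B i i / 2)) :=
  Finset.prod_range_succ _ _

theorem serreCoeff_eq_zero {i j : Fin (l+1)} {m : ℕ} (hm : (m : ℤ) = -K.A i j) :
    K.serreCoeff i j (m + 1) = 0 := by
  rw [serreCoeff_succ, mul_eq_zero]
  right
  simp only [B, K.diag, show (m : ℂ) = -(K.A i j : ℂ) by exact_mod_cast hm]
  push_cast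
  ring

@[simp] theorem derivative_fdbIntegral (i : Fin (l+1)) :
    d⁄dX (Pi0 l) (K.fdbIntegral i) = K.fdbSeries i :=
  PowerSeries.derivative_integral _

@[simp] theorem constantCoeff_fdbIntegral (i : Fin (l+1)) :
    PowerSeries.constantCoeff (K.fdbIntegral i) = 0 :=
  PowerSeries.constantCoeff_integral _

@[simp] theorem derivative_serreSeries (i j : Fin (l+1)) (m : ℕ) :
    d⁄dX (Pi0 l) (K.serreSeries i j m) = K.fdbSeries j * K.fdbIntegral i ^ m :=
  PowerSeries.derivative_integral _

theorem mapPowerSeries_Q_fdbSeries (i k : Fin (l+1)) :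
    (K.Q i).mapPowerSeries (K.fdbSeries k) = K.B i k • (K.fdbSeries k * K.fdbIntegral i) := by
  rw [mapPowerSeries_fdbSeries, mapPowerSeries_Q_uSeries, map_neg, PowerSeries.integral_smul,
    fdbIntegral, mul_neg, neg_neg, mul_smul_comm]

theorem mapPowerSeries_Q_fdbIntegral (i : Fin (l+1)) :
    (K.Q i).mapPowerSeries (K.fdbIntegral i) = (K.B i i / 2) • K.fdbIntegral i ^ 2 := by
  have hparts := PowerSeries.integral_derivative_mul (K.fdbIntegral i) (K.fdbIntegral i)
  simp only [derivative_fdbIntegral, map_mul, constantCoeff_fdbIntegral, mul_zero, map_zero,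
    sub_zero, mul_comm (K.fdbIntegral i) (K.fdbSeries i)] at hparts
  rw [fdbIntegral, Derivation.mapPowerSeries_integral, mapPowerSeries_Q_fdbSeries,
    PowerSeries.integral_smul, ← fdbIntegral, sq]
  linear_combination (norm := module) (K.B i i / 2) • hparts

theorem mapPowerSeries_Q_fdbIntegral_pow (i : Fin (l+1)) (m : ℕ) :
    (K.Q i).mapPowerSeries (K.fdbIntegral i ^ m) =
      (m * (K.B i i / 2)) • K.fdbIntegral i ^ (m + 1) := by
  induction m with
  | zero => simp
  | succ m ih =>
    rw [pow_succ, Derivation.leibniz, ih, mapPowerSeries_Q_fdbIntegral, smul_eq_mul, smul_eq_mul]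
    push_cast
    simp only [Algebra.smul_def, map_mul, map_add, map_natCast, map_one]
    ring

theorem mapPowerSeries_Q_fdbSeries_mul_pow (i j : Fin (l+1)) (m : ℕ) :
    (K.Q i).mapPowerSeries (K.fdbSeries j * K.fdbIntegral i ^ m) =
      (K.B i j + m * (K.B i i / 2)) • (K.fdbSeries j * K.fdbIntegral i ^ (m + 1)) := by
  rw [Derivation.leibniz, mapPowerSeries_Q_fdbIntegral_pow, mapPowerSeries_Q_fdbSeries,
    smul_eq_mul, smul_eq_mul]
  simp only [Algebra.smul_def, map_add]
  ring

theorem mapPowerSeries_Q_serreSeries (i j : Fin (l+1)) (m : ℕ) :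
    (K.Q i).mapPowerSeries (K.serreSeries i j m) =
      (K.B i j + m * (K.B i i / 2)) • K.serreSeries i j (m + 1) := by
  rw [serreSeries, Derivation.mapPowerSeries_integral, mapPowerSeries_Q_fdbSeries_mul_pow,
    PowerSeries.integral_smul, serreSeries]

theorem integral_fdbSeries_mul_serreSeries (i j : Fin (l+1)) (m : ℕ) :
    integral (K.fdbSeries i * K.serreSeries i j m) =
      K.fdbIntegral i * K.serreSeries i j m - K.serreSeries i j (m + 1) := by
  have h := PowerSeries.integral_derivative_mul (K.fdbIntegral i) (K.serreSeries i j m)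
  simp only [derivative_fdbIntegral, derivative_serreSeries, map_mul, constantCoeff_fdbIntegral,
    zero_mul, map_zero, sub_zero] at h
  rw [h, sub_right_inj, serreSeries]
  ring_nf

theorem hasSymbol_iterate_Q (i j : Fin (l+1)) (m : ℕ) :
    K.HasSymbol i j ((fun D => ⁅K.Q i, D⁆)^[m + 1] (K.Q j))
      (-((m + 1) * K.serreCoeff i j (m + 1)) • (K.fdbSeries i * K.serreSeries i j m))
      (K.serreCoeff i j (m + 1) • (K.fdbSeries j * K.fdbIntegral i ^ (m + 1))) := by
  induction m with
  | zero =>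
    rw [zero_add, Function.iterate_one]
    convert (K.hasSymbol_Q_right i j).commutator_Q using 1
    · simp [serreCoeff, serreSeries, PowerSeries.integral_smul]
    · simp [serreCoeff, mapPowerSeries_Q_fdbSeries]
  | succ m ih =>
    rw [Function.iterate_succ_apply']
    convert ih.commutator_Q using 1
    · simp only [Derivation.map_smul, Derivation.leibniz, mapPowerSeries_Q_fdbSeries,
        mapPowerSeries_Q_serreSeries, map_add, PowerSeries.integral_smul,
        integral_fdbSeries_mul_serreSeries, serreCoeff_succ (m := m + 1)]
      rw [← serreSeries]
      simp only [smul_eq_mul, mul_smul_comm, smul_sub, smul_add, mul_sub, mul_add]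
      simp only [mul_comm, mul_left_comm, mul_assoc]
      push_cast
      module
    · rw [Derivation.map_smul, mapPowerSeries_Q_fdbSeries_mul_pow, smul_smul, serreCoeff_succ]

end AffineGCM

theorem serre_relations_general (l : ℕ) (K : AffineGCM l)
    (i j : Fin (l+1)) (hij : i ≠ j) :
    (fun D => ⁅K.Q i, D⁆)^[(1 - K.A i j).toNat] (K.Q j) = 0 := by
  obtain ⟨m, hm⟩ : ∃ m : ℕ, (m : ℤ) = -K.A i j :=
    ⟨(-K.A i j).toNat, Int.toNat_of_nonneg (by linarith [K.offdiag i j hij])⟩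
  have hN : (1 - K.A i j).toNat = m + 1 := by omega
  rw [hN]
  refine AffineGCM.HasSymbol.eq_zero (K := K) (i := i) (j := j) ?_
  simpa [K.serreCoeff_eq_zero hm] using K.hasSymbol_iterate_Q i j m

/-- For `i ≠ j` in `{0,…,l}`, the derivations `Q_i` of `π₀` satisfy the Serre
relations of the affine Kac–Moody algebra with Cartan matrix `A`:
`(ad Q_i)^{-a_{ij}+1}(Q_j) = 0` in the Lie algebra of `ℂ`-derivations of `π₀`. -/
theorem serre_relations (l : ℕ) (hl : 1 ≤ l) (K : AffineGCM l)
    (i j : Fin (l+1)) (hij : i ≠ j) :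
    (fun D => ⁅K.Q i, D⁆)^[(1 - K.A i j).toNat] (K.Q j) = 0 :=
  serre_relations_general l K i j hij
end
end

section
/- For every i ∈ {0, …, l}, the operators Q_i and ∂ on π₀ satisfy the commutation relation Q_i ∘ ∂ − ∂ ∘ Q_i = −u_i^{(0)} · Q_i, i.e. Q_i(∂P) − ∂(Q_i(P)) = −u_i^{(0)} Q_i(P) for all P ∈ π₀. (Equivalently, Q_i intertwines ∂ on π₀ with the twisted derivative ∂ − u_i^{(0)} on the module π_{-α_i}.) -/
open MvPolynomial

noncomputable section

/-! Proof: both sides of `⁅Q_i, ∂⁆ = -u_i^{(0)} • Q_i` are derivations, so it suffices to compare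
them on the generators `u_j^{(n)}`. There `Q_i ∂ u_j^{(n)} - ∂ Q_i u_j^{(n)}` equals
`-(α_i,α_j) (B_i^{(n+1)} - ∂ B_i^{(n)})`, and the Faà di Bruno recursion says exactly that
`B_i^{(n+1)} - ∂ B_i^{(n)} = -u_i^{(0)} B_i^{(n)}`. -/

theorem pa_X {l : ℕ} (j : Fin l) (n : ℕ) : pa l (X (j, n)) = X (j, n + 1) :=
  mkDerivation_X ℂ _ _

namespace AffineGCM

variable {l : ℕ} (K : AffineGCM l)

theorem Q_X (i : Fin (l+1)) (j : Fin l) (n : ℕ) :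
    K.Q i (X (j, n)) = -(K.B i j.succ) • K.FdB i n :=
  mkDerivation_X ℂ _ _

theorem FdB_succ_sub_pa (i : Fin (l+1)) (n : ℕ) :
    K.FdB i (n + 1) - pa l (K.FdB i n) = -(K.Uv i 0) * K.FdB i n :=
  add_sub_cancel_right _ _

theorem commutator_Q_pa (i : Fin (l+1)) : ⁅K.Q i, pa l⁆ = -(K.Uv i 0) • K.Q i := by
  refine MvPolynomial.derivation_ext fun ⟨j, n⟩ => ?_
  rw [Derivation.commutator_apply, Derivation.smul_apply, pa_X, Q_X, Q_X, Derivation.map_smul,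
    ← smul_sub, FdB_succ_sub_pa, smul_eq_mul, mul_smul_comm]

end AffineGCM

theorem Q_twisted_intertwine_general (l : ℕ) (K : AffineGCM l)
    (i : Fin (l+1)) (P : Pi0 l) :
    K.Q i (pa l P) - pa l (K.Q i P) = -(K.Uv i 0) * K.Q i P := by
  simpa only [Derivation.commutator_apply, Derivation.smul_apply, smul_eq_mul] using
    DFunLike.congr_fun (K.commutator_Q_pa i) P

/-- `Q_i(∂P) − ∂(Q_i(P)) = −u_i^{(0)} Q_i(P)` for all `P ∈ π₀`. -/
theorem Q_twisted_intertwine (l : ℕ) (hl : 1 ≤ l) (K : AffineGCM l)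
    (i : Fin (l+1)) (P : Pi0 l) :
    K.Q i (pa l P) - pa l (K.Q i P) = -(K.Uv i 0) * K.Q i P :=
  Q_twisted_intertwine_general l K i P
end
end

section
/- The Gelfand–Dickey–Dorfman bracket is antisymmetric up to total derivatives: for all P, R ∈ π₀, the element ξ_P(R) + ξ_R(P) lies in the image ∂(π₀) of the derivation ∂. -/
open MvPolynomial

noncomputable section

variable {l : ℕ}

/-- The variational derivative `δ_i P := ∑_{j=1}^l c_{ij} ∑_{n ≥ 0} (-∂)^n (∂P/∂u_j^{(n)})`
associated to a symmetric matrix `c` of complex numbers. -/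
def vard (c : Matrix (Fin l) (Fin l) ℂ) (i : Fin l) (P : Pi0 l) : Pi0 l :=
  ∑ j : Fin l, c i j • ∑ᶠ n : ℕ, ((-(pa l).toLinearMap) ^ n) (pderiv (j, n) P)

/-- The hamiltonian vector field `ξ_P`: the unique `ℂ`-derivation of `π₀` with
`ξ_P u_i^{(n)} = ∂^{n+1}(δ_i P)`. -/
def xic (c : Matrix (Fin l) (Fin l) ℂ) (P : Pi0 l) : Derivation ℂ (Pi0 l) (Pi0 l) :=
  mkDerivation ℂ (fun p => ((pa l).toLinearMap ^ (p.2 + 1)) (vard c p.1 P))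

/-!
By the chain rule, `ξ_P(R) = ∑ ∂R/∂u_i^{(n)} · ∂^{n+1}(δ_i P)`. Integrating by parts `n` times,
`a · ∂^n b ≡ (-∂)^n a · b` modulo `∂(π₀)`, so `ξ_P(R) ≡ ∑_i (δR/δu_i) · ∂(δ_i P)`, where
`δ/δu_i = vard 1 i` is the Euler–Lagrange operator and `δ_i P = ∑_j c_ij δP/δu_j`. Adding the same
expression with `P` and `R` swapped and using `c_ij = c_ji`, the Leibniz rule turns the sum into
`∂(∑_ij c_ij (δR/δu_i)(δP/δu_j))`.
-/

namespace MvPolynomial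

variable {σ R : Type*} [CommRing R]

theorem derivation_apply_eq_sum_pderiv_mul (D : Derivation R (MvPolynomial σ R) (MvPolynomial σ R))
    {s : Finset σ} {f : MvPolynomial σ R} (hf : f.vars ⊆ s) :
    D f = ∑ p ∈ s, pderiv p f * D (X p) := by
  classical
  let D' : Derivation R (MvPolynomial σ R) (MvPolynomial σ R) := ∑ p ∈ s, D (X p) • pderiv p
  have hD' : ∀ g, D' g = ∑ p ∈ s, pderiv p g * D (X p) := fun g => by
    rw [← Derivation.coeFnAddMonoidHom_apply, map_sum, Finset.sum_apply]
    simp [Derivation.smul_apply, mul_comm]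
  rw [← hD']
  refine derivation_eq_of_forall_mem_vars fun i hi => ?_
  rw [hD', Finset.sum_eq_single_of_mem i (hf hi) fun p _ hpi => by simp [pderiv_X_of_ne hpi.symm]]
  simp

end MvPolynomial

namespace Derivation

variable {R A : Type*} [CommRing R] [CommRing A] [Algebra R A] (D : Derivation R A A)

theorem mul_pow_apply_sub_neg_pow_apply_mul_mem_range (n : ℕ) (a b : A) :
    a * (D.toLinearMap ^ n) b - ((-D.toLinearMap) ^ n) a * b ∈ LinearMap.range D.toLinearMap := by
  induction n generalizing a with
  | zero => simp
  | succ n ih =>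
    have hsplit : a * (D.toLinearMap ^ (n + 1)) b - ((-D.toLinearMap) ^ (n + 1)) a * b
        = D (a * (D.toLinearMap ^ n) b) + ((-D) a * (D.toLinearMap ^ n) b
          - ((-D.toLinearMap) ^ n) ((-D) a) * b) := by
      rw [pow_succ', pow_succ]
      simp only [Module.End.mul_apply, coeFn_coe, LinearMap.neg_apply, map_neg, neg_mul,
        sub_neg_eq_add, leibniz, smul_eq_mul, coe_neg, Pi.neg_apply]
      ring
    rw [hsplit]
    exact add_mem (LinearMap.mem_range_self _ _) (ih _)

theorem sum_mul_apply_sum_smul_add_swap {ι : Type*} [Fintype ι]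
    {c : Matrix ι ι R} (hc : c.IsSymm) (a b : ι → A) :
    ∑ i, a i * D (∑ j, c i j • b j) + ∑ i, b i * D (∑ j, c i j • a j)
      = D (∑ i, ∑ j, c i j • (a i * b j)) := by
  simp only [map_sum, map_smul, Derivation.leibniz, smul_eq_mul, smul_add, Finset.mul_sum,
    Finset.sum_add_distrib, mul_smul_comm]
  rw [Finset.sum_comm (f := fun i j => c i j • (b j * D (a i)))]
  exact congrArg _ <| Finset.sum_congr rfl fun i _ => Finset.sum_congr rfl fun j _ => by
    rw [hc.apply i j]

end Derivation

open Finset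

theorem vars_subset_univ_product_range (Q : Pi0 l) :
    Q.vars ⊆ univ ×ˢ range (Q.vars.sup Prod.snd + 1) := fun _ hp =>
  mem_product.2 ⟨mem_univ _, mem_range.2 (Nat.lt_succ_of_le (le_sup hp))⟩

theorem vard_eq_sum_smul_vard_one (c : Matrix (Fin l) (Fin l) ℂ) (i : Fin l) (Q : Pi0 l) :
    vard c i Q = ∑ j, c i j • vard 1 j Q := by
  simp [vard, Matrix.one_apply]

theorem vard_one_eq_sum_range {N : ℕ} {Q : Pi0 l} (hQ : Q.vars ⊆ univ ×ˢ range N) (i : Fin l) :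
    vard 1 i Q = ∑ n ∈ range N, ((-(pa l).toLinearMap) ^ n) (pderiv (i, n) Q) := by
  simp only [vard, Matrix.one_apply, ite_smul, one_smul, zero_smul, sum_ite_eq, mem_univ, if_true]
  refine finsum_eq_sum_of_support_subset _ fun n hn => ?_
  by_contra hN
  have hzero : pderiv (i, n) Q = 0 :=
    pderiv_eq_zero_of_notMem_vars fun h => hN (mem_coe.2 (mem_product.1 (hQ h)).2)
  exact hn (by simp [hzero])

theorem xic_apply_sub_sum_mem_range (c : Matrix (Fin l) (Fin l) ℂ) (P Q : Pi0 l) :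
    xic c P Q - ∑ i, vard 1 i Q * pa l (vard c i P) ∈ LinearMap.range (pa l).toLinearMap := by
  set s := (univ : Finset (Fin l)) ×ˢ range (Q.vars.sup Prod.snd + 1)
  have hQ := vars_subset_univ_product_range Q
  have hxic : xic c P Q
      = ∑ p ∈ s, pderiv p Q * ((pa l).toLinearMap ^ p.2) (pa l (vard c p.1 P)) := by
    rw [MvPolynomial.derivation_apply_eq_sum_pderiv_mul _ hQ]
    simp only [xic, mkDerivation_X, pow_succ, Module.End.mul_apply]
    rfl
  have hsum : ∑ i, vard 1 i Q * pa l (vard c i P)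
      = ∑ p ∈ s, ((-(pa l).toLinearMap) ^ p.2) (pderiv p Q) * pa l (vard c p.1 P) := by
    simp only [s, sum_product, vard_one_eq_sum_range hQ, sum_mul]
  rw [hxic, hsum, ← sum_sub_distrib]
  exact Submodule.sum_mem _ fun p _ => (pa l).mul_pow_apply_sub_neg_pow_apply_mul_mem_range p.2 _ _

theorem bracket_antisymmetric_mod_derivatives_general (l : ℕ)
    (c : Matrix (Fin l) (Fin l) ℂ) (hc : c.IsSymm) (P R : Pi0 l) :
    ∃ S : Pi0 l, xic c P R + xic c R P = pa l S := by
  have hPR := xic_apply_sub_sum_mem_range c P R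
  have hRP := xic_apply_sub_sum_mem_range c R P
  have hsymm := (pa l).sum_mul_apply_sum_smul_add_swap hc
    (fun i => vard 1 i R) (fun i => vard 1 i P)
  simp only [← vard_eq_sum_smul_vard_one] at hsymm
  obtain ⟨S, hS⟩ := add_mem (add_mem hPR hRP) (LinearMap.mem_range_self (pa l).toLinearMap
    (∑ i, ∑ j, c i j • (vard 1 i R * vard 1 j P)))
  refine ⟨S, ?_⟩
  rw [Derivation.coeFn_coe, ← hsymm] at hS
  rw [hS]
  abel

/-- the Gelfand–Dickey–Dorfman bracket is antisymmetric up to total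
derivatives: `ξ_P(R) + ξ_R(P) ∈ ∂(π₀)`. -/
theorem bracket_antisymmetric_mod_derivatives (l : ℕ) (hl : 1 ≤ l)
    (c : Matrix (Fin l) (Fin l) ℂ) (hc : c.IsSymm) (P R : Pi0 l) :
    ∃ S : Pi0 l, xic c P R + xic c R P = pa l S :=
  bracket_antisymmetric_mod_derivatives_general l c hc P R
end
end

section
/- There is a unique Lie algebra structure on the quotient ℂ-vector space F₀ := π₀ / (∂(π₀) + ℂ·1) (the space of local functionals) whose bracket satisfies {[P], [R]} = [ξ_P(R)] for all P, R ∈ π₀, where [·] denotes the class in F₀. In particular the bracket is well defined (ξ_P(R) modulo ∂(π₀) + ℂ·1 depends only on the classes of P and R), antisymmetric, and satisfies the Jacobi identity. -/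
open MvPolynomial

noncomputable section

variable {l : ℕ}

/-- The subspace `∂(π₀) + ℂ·1` of `π₀`. -/
def Fzsub (l : ℕ) : Submodule ℂ (Pi0 l) :=
  LinearMap.range (pa l).toLinearMap ⊔ Submodule.span ℂ {(1 : Pi0 l)}

/-- The space of local functionals `F₀ := π₀ / (∂(π₀) + ℂ·1)`. -/
abbrev Fz (l : ℕ) : Type := Pi0 l ⧸ Fzsub l

/-! Write `ξ_P = X_Q` for the evolutionary derivation with characteristic `Q_k = ∂(δ_k P)`
(`X_Q u_k^{(m)} = ∂^m Q_k`). It commutes with `∂`, so it preserves `∂π₀ + ℂ·1`, and `δ` kills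
that subspace; hence the bracket descends to `F₀`. Integration by parts gives
`X_Q F ≡ ∑_k Q_k E_k F` modulo `∂π₀`, where `E_k` is the Euler operator, and by the symmetry of
`c` this makes `ξ_P R + ξ_R P` a total derivative. For the Jacobi identity, the formula
`E_j (X_Q F) = X_Q (E_j F) + ∑_k D*_{Q_k} (E_k F)` (with `D*` the adjoint of the Fréchet
derivative), the rule `D*_{∂G} w = D*_G (-∂w)` and the Helmholtz symmetry of the Fréchet
derivatives of `E F` give `δ (ξ_P R) = ξ_P (δ R) - ξ_R (δ P)`. Hence `[ξ_P, ξ_R]` and `ξ_{ξ_P R}`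
agree on the generators, so they are equal. -/

namespace MvPolynomial

variable {R σ : Type*} [CommRing R]

theorem derivation_commutator_apply_eq
    {d₁ d₂ d₃ : Derivation R (MvPolynomial σ R) (MvPolynomial σ R)}
    (h : ∀ i, d₁ (d₂ (X i)) - d₂ (d₁ (X i)) = d₃ (X i)) (f : MvPolynomial σ R) :
    d₁ (d₂ f) - d₂ (d₁ f) = d₃ f := by
  have hcomm : ⁅d₁, d₂⁆ = d₃ := derivation_ext fun i => by rw [Derivation.commutator_apply, h]
  rw [← Derivation.commutator_apply, hcomm]

theorem pderiv_pderiv_comm (i j : σ) (f : MvPolynomial σ R) :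
    pderiv i (pderiv j f) = pderiv j (pderiv i f) := by
  classical
  refine sub_eq_zero.mp (derivation_commutator_apply_eq (d₃ := 0) (fun k => ?_) f)
  simp only [pderiv_X, Pi.single_apply]
  split_ifs <;> simp

theorem derivation_eq_finsum_pderiv_mul (d : Derivation R (MvPolynomial σ R) (MvPolynomial σ R))
    (f : MvPolynomial σ R) : d f = ∑ᶠ i, pderiv i f * d (X i) := by
  classical
  have hsupp : (Function.support fun i => pderiv i f * d (X i)) ⊆ f.vars := fun i hi => by
    by_contra h
    exact hi (by simp only [pderiv_eq_zero_of_notMem_vars h, zero_mul])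
  let d' : Derivation R (MvPolynomial σ R) (MvPolynomial σ R) := ∑ i ∈ f.vars, d (X i) • pderiv i
  have hd' (g : MvPolynomial σ R) : d' g = ∑ i ∈ f.vars, pderiv i g * d (X i) := by
    rw [← Derivation.coeFnAddMonoidHom_apply, map_sum, Finset.sum_apply]
    simp [Derivation.smul_apply, mul_comm]
  rw [finsum_eq_sum_of_support_subset _ hsupp, ← hd']
  refine derivation_eq_of_forall_mem_vars fun i hi => ?_
  simp [hd', pderiv_X, Pi.single_apply, hi]

end MvPolynomial

theorem Derivation.mul_pow_apply_sub_mem_range {R A : Type*} [CommRing R] [CommRing A]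
    [Algebra R A] (d : Derivation R A A) (m : ℕ) (a b : A) :
    a * (d.toLinearMap ^ m) b - ((-d.toLinearMap) ^ m) a * b ∈ LinearMap.range d.toLinearMap := by
  induction m generalizing b with
  | zero => simp
  | succ m ih =>
    have hsplit : a * (d.toLinearMap ^ (m + 1)) b - ((-d.toLinearMap) ^ (m + 1)) a * b
        = (a * (d.toLinearMap ^ m) (d b) - ((-d.toLinearMap) ^ m) a * d b)
          + d (((-d.toLinearMap) ^ m) a * b) := by
      rw [pow_succ, pow_succ', Module.End.mul_apply, Module.End.mul_apply, Derivation.leibniz]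
      simp only [LinearMap.neg_apply, Derivation.coeFn_coe, smul_eq_mul]
      ring
    rw [hsplit]
    exact add_mem (ih _) (LinearMap.mem_range_self _ _)

namespace LocalFunctional

open Finset

abbrev D (l : ℕ) : Module.End ℂ (Pi0 l) := (pa l).toLinearMap

lemma pa_X (p : Fin l × ℕ) : pa l (X p) = X (p.1, p.2 + 1) := mkDerivation_X _ _ _

lemma pderiv_zero_pa (j : Fin l) (F : Pi0 l) :
    pderiv (j, 0) (pa l F) = pa l (pderiv (j, 0) F) := by
  classical
  refine sub_eq_zero.mp (derivation_commutator_apply_eq (d₃ := 0) (fun p => ?_) F)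
  simp only [pa_X, pderiv_X, Pi.single_apply, Prod.ext_iff]
  split_ifs <;> simp_all

lemma pderiv_succ_pa (j : Fin l) (n : ℕ) (F : Pi0 l) :
    pderiv (j, n + 1) (pa l F) = pa l (pderiv (j, n + 1) F) + pderiv (j, n) F := by
  classical
  rw [← sub_eq_iff_eq_add']
  refine derivation_commutator_apply_eq (fun p => ?_) F
  simp only [pa_X, pderiv_X, Pi.single_apply, Prod.ext_iff]
  split_ifs <;> simp_all

def DiffOrderLT (N : ℕ) (F : Pi0 l) : Prop :=
  ∀ (j : Fin l) (n : ℕ), N ≤ n → pderiv (j, n) F = 0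

lemma exists_diffOrderLT (F : Pi0 l) : ∃ N, DiffOrderLT N F := by
  refine ⟨F.vars.sup Prod.snd + 1, fun j n hn => pderiv_eq_zero_of_notMem_vars fun hv => ?_⟩
  have := Finset.le_sup (f := Prod.snd) hv
  omega

namespace DiffOrderLT

variable {N : ℕ} {F : Pi0 l}

lemma mono (hF : DiffOrderLT N F) {M : ℕ} (hNM : N ≤ M) : DiffOrderLT M F :=
  fun j n hn => hF j n (hNM.trans hn)

lemma pderiv (hF : DiffOrderLT N F) (p : Fin l × ℕ) : DiffOrderLT N (pderiv p F) :=
  fun j n hn => by rw [pderiv_pderiv_comm, hF j n hn, map_zero]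

lemma pa (hF : DiffOrderLT N F) : DiffOrderLT (N + 1) (pa l F) := by
  rintro j (_ | n) hn
  · omega
  · rw [pderiv_succ_pa, hF j (n + 1) (by omega), hF j n (by omega), map_zero, add_zero]

end DiffOrderLT

lemma support_pderiv_subset_range {N : ℕ} {F : Pi0 l} (hF : DiffOrderLT N F) (j : Fin l)
    (g : ℕ → Pi0 l → Pi0 l) (hg : ∀ n, g n 0 = 0) :
    (Function.support fun n => g n (pderiv (j, n) F)) ⊆ range N := fun n hn => by
  by_contra h
  exact hn (by simp only [hF j n (by simpa using h), hg])

lemma finsum_pderiv_eq_sum_range {N : ℕ} {F : Pi0 l} (hF : DiffOrderLT N F) (j : Fin l)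
    (g : ℕ → Pi0 l → Pi0 l) (hg : ∀ n, g n 0 = 0) :
    ∑ᶠ n, g n (pderiv (j, n) F) = ∑ n ∈ range N, g n (pderiv (j, n) F) :=
  finsum_eq_sum_of_support_subset _ (support_pderiv_subset_range hF j g hg)

lemma hasFiniteSupport_pderiv (F : Pi0 l) (j : Fin l) (g : ℕ → Pi0 l → Pi0 l)
    (hg : ∀ n, g n 0 = 0) : Function.HasFiniteSupport fun n => g n (pderiv (j, n) F) := by
  obtain ⟨N, hN⟩ := exists_diffOrderLT F
  exact (finite_toSet (range N)).subset (support_pderiv_subset_range hN j g hg)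

def evolDeriv (Q : Fin l → Pi0 l) : Derivation ℂ (Pi0 l) (Pi0 l) :=
  mkDerivation ℂ fun p => (D l ^ p.2) (Q p.1)

lemma evolDeriv_X (Q : Fin l → Pi0 l) (p : Fin l × ℕ) :
    evolDeriv Q (X p) = (D l ^ p.2) (Q p.1) := mkDerivation_X _ _ _

lemma evolDeriv_pa (Q : Fin l → Pi0 l) (F : Pi0 l) :
    evolDeriv Q (pa l F) = pa l (evolDeriv Q F) := by
  refine sub_eq_zero.mp (derivation_commutator_apply_eq (d₃ := 0) (fun p => ?_) F)
  rw [pa_X, evolDeriv_X, evolDeriv_X, pow_succ']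
  exact sub_self _

lemma commute_evolDeriv_D (Q : Fin l → Pi0 l) : Commute (evolDeriv Q).toLinearMap (D l) :=
  LinearMap.ext (evolDeriv_pa Q)

lemma evolDeriv_D_pow (Q : Fin l → Pi0 l) (m : ℕ) (F : Pi0 l) :
    evolDeriv Q ((D l ^ m) F) = (D l ^ m) (evolDeriv Q F) :=
  LinearMap.congr_fun ((commute_evolDeriv_D Q).pow_right m).eq F

lemma evolDeriv_neg_D_pow (Q : Fin l → Pi0 l) (m : ℕ) (F : Pi0 l) :
    evolDeriv Q (((-D l) ^ m) F) = ((-D l) ^ m) (evolDeriv Q F) :=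
  LinearMap.congr_fun ((commute_evolDeriv_D Q).neg_right.pow_right m).eq F

lemma evolDeriv_apply (Q : Fin l → Pi0 l) {N : ℕ} {F : Pi0 l} (hF : DiffOrderLT N F) :
    evolDeriv Q F = ∑ k, ∑ m ∈ range N, pderiv (k, m) F * (D l ^ m) (Q k) := by
  rw [derivation_eq_finsum_pderiv_mul, finsum_eq_sum_of_support_subset (s := univ ×ˢ range N),
    sum_product]
  · simp only [evolDeriv_X]
  · rintro ⟨k, m⟩ hkm
    by_contra h
    exact hkm (by simp only [hF k m (by simpa using h), zero_mul])

lemma xic_X (c : Matrix (Fin l) (Fin l) ℂ) (P : Pi0 l) (p : Fin l × ℕ) :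
    xic c P (X p) = (D l ^ (p.2 + 1)) (vard c p.1 P) := mkDerivation_X _ _ _

lemma xic_eq_evolDeriv (c : Matrix (Fin l) (Fin l) ℂ) (P : Pi0 l) :
    xic c P = evolDeriv fun k => pa l (vard c k P) :=
  derivation_ext fun p => by
    rw [xic_X, evolDeriv_X, pow_succ]
    rfl

lemma xic_pa (c : Matrix (Fin l) (Fin l) ℂ) (P F : Pi0 l) :
    xic c P (pa l F) = pa l (xic c P F) := by
  rw [xic_eq_evolDeriv, evolDeriv_pa]

lemma xic_D_pow (c : Matrix (Fin l) (Fin l) ℂ) (P : Pi0 l) (m : ℕ) (F : Pi0 l) :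
    xic c P ((D l ^ m) F) = (D l ^ m) (xic c P F) := by
  rw [xic_eq_evolDeriv, evolDeriv_D_pow]

/-- The `j`-th component of `D*_F w`, the formal adjoint of the Fréchet derivative of `F`
applied to `w`. -/
def adjointFrechet (j : Fin l) : Pi0 l →ₗ[ℂ] Pi0 l →ₗ[ℂ] Pi0 l :=
  LinearMap.mk₂ ℂ (fun F w => ∑ᶠ n, ((-D l) ^ n) (pderiv (j, n) F * w))
    (fun F F' w => by
      simp only [map_add, add_mul]
      exact finsum_add_distrib (hasFiniteSupport_pderiv F j (fun n x => ((-D l) ^ n) (x * w))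
        fun n => by simp) (hasFiniteSupport_pderiv F' j (fun n x => ((-D l) ^ n) (x * w))
        fun n => by simp))
    (fun t F w => by
      simp only [Derivation.map_smul, smul_mul_assoc, LinearMap.map_smul]
      exact (smul_finsum t _).symm)
    (fun F w w' => by
      simp only [mul_add, map_add]
      exact finsum_add_distrib (hasFiniteSupport_pderiv F j (fun n x => ((-D l) ^ n) (x * w))
        fun n => by simp) (hasFiniteSupport_pderiv F j (fun n x => ((-D l) ^ n) (x * w'))
        fun n => by simp))
    (fun t F w => by
      simp only [mul_smul_comm, LinearMap.map_smul]
      exact (smul_finsum t _).symm)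

lemma adjointFrechet_apply (j : Fin l) (F w : Pi0 l) :
    adjointFrechet j F w = ∑ᶠ n, ((-D l) ^ n) (pderiv (j, n) F * w) := rfl

lemma adjointFrechet_eq_sum_range {N : ℕ} {F : Pi0 l} (hF : DiffOrderLT N F) (j : Fin l)
    (w : Pi0 l) :
    adjointFrechet j F w = ∑ n ∈ range N, ((-D l) ^ n) (pderiv (j, n) F * w) :=
  finsum_pderiv_eq_sum_range hF j (fun n x => ((-D l) ^ n) (x * w)) fun n => by simp

lemma adjointFrechet_pa (j : Fin l) (F w : Pi0 l) :
    adjointFrechet j (pa l F) w = adjointFrechet j F (-pa l w) := by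
  obtain ⟨N, hN⟩ := exists_diffOrderLT F
  rw [adjointFrechet_eq_sum_range hN.pa, adjointFrechet_eq_sum_range (hN.mono N.le_succ)]
  set f : ℕ → Pi0 l := fun n => pderiv (j, n) F
  set a : ℕ → Pi0 l := fun n => ((-D l) ^ n) (pa l (f n) * w)
  set b : ℕ → Pi0 l := fun n => ((-D l) ^ (n + 1)) (f n * w)
  have hb : b N = 0 := by simp only [b, f, hN j N le_rfl, zero_mul, map_zero]
  have hab (n : ℕ) : ((-D l) ^ n) (f n * -pa l w) = a n + b n := by
    simp only [a, b, pow_succ, Module.End.mul_apply, ← map_add]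
    congr 1
    simp only [LinearMap.neg_apply, D, Derivation.coeFn_coe, Derivation.leibniz, smul_eq_mul]
    ring
  calc ∑ n ∈ range (N + 1), ((-D l) ^ n) (pderiv (j, n) (pa l F) * w)
      = ∑ n ∈ range N, (a (n + 1) + b n) + a 0 := by
        rw [sum_range_succ']
        simp only [pderiv_succ_pa, pderiv_zero_pa, a, b, f, add_mul, map_add, pow_succ']
    _ = ∑ n ∈ range (N + 1), (a n + b n) := by
        rw [sum_add_distrib, sum_add_distrib, sum_range_succ' a, sum_range_succ b, hb]
        abel
    _ = ∑ n ∈ range (N + 1), ((-D l) ^ n) (pderiv (j, n) F * -pa l w) :=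
        sum_congr rfl fun n _ => (hab n).symm

lemma adjointFrechet_D_pow (j : Fin l) (m : ℕ) (F w : Pi0 l) :
    adjointFrechet j ((D l ^ m) F) w = adjointFrechet j F (((-D l) ^ m) w) := by
  induction m generalizing F with
  | zero => rfl
  | succ m ih =>
    rw [pow_succ, Module.End.mul_apply, ih, pow_succ', Module.End.mul_apply]
    exact adjointFrechet_pa j F _

lemma adjointFrechet_neg_D_pow (j : Fin l) (m : ℕ) (F w : Pi0 l) :
    adjointFrechet j (((-D l) ^ m) F) w = adjointFrechet j F ((D l ^ m) w) := by
  induction m generalizing F with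
  | zero => rfl
  | succ m ih =>
    rw [pow_succ, Module.End.mul_apply, ih, pow_succ', Module.End.mul_apply]
    simp only [LinearMap.neg_apply, map_neg, D, Derivation.coeFn_coe, adjointFrechet_pa, neg_neg]

def euler (j : Fin l) : Pi0 l →ₗ[ℂ] Pi0 l := (adjointFrechet j).flip 1

lemma euler_eq_sum_range {N : ℕ} {F : Pi0 l} (hF : DiffOrderLT N F) (j : Fin l) :
    euler j F = ∑ n ∈ range N, ((-D l) ^ n) (pderiv (j, n) F) := by
  simp [euler, adjointFrechet_eq_sum_range hF]

lemma vard_eq_sum_euler (c : Matrix (Fin l) (Fin l) ℂ) (i : Fin l) (F : Pi0 l) :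
    vard c i F = ∑ j, c i j • euler j F := by
  simp [vard, euler, adjointFrechet_apply]

lemma euler_pa (j : Fin l) (F : Pi0 l) : euler j (pa l F) = 0 := by
  simp [euler, adjointFrechet_pa]

lemma euler_one (j : Fin l) : euler j (1 : Pi0 l) = 0 := by
  simp [euler, adjointFrechet_apply]

lemma euler_mul (j : Fin l) (F G : Pi0 l) :
    euler j (F * G) = adjointFrechet j F G + adjointFrechet j G F := by
  simp only [euler, LinearMap.flip_apply, adjointFrechet_apply, Derivation.leibniz, smul_eq_mul,
    mul_one, map_add]
  rw [← finsum_add_distrib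
    (hasFiniteSupport_pderiv F j (fun n x => ((-D l) ^ n) (x * G)) fun n => by simp)
    (hasFiniteSupport_pderiv G j (fun n x => ((-D l) ^ n) (x * F)) fun n => by simp)]
  exact finsum_congr fun n => by rw [add_comm, mul_comm F, mul_comm G]

lemma evolDeriv_euler_eq_sum (Q : Fin l → Pi0 l) {N : ℕ} {F : Pi0 l} (hF : DiffOrderLT N F)
    (j : Fin l) :
    evolDeriv Q (euler j F)
      = ∑ k, ∑ m ∈ range N, adjointFrechet j (pderiv (k, m) F) ((D l ^ m) (Q k)) := by
  simp only [euler_eq_sum_range hF, map_sum, evolDeriv_neg_D_pow, evolDeriv_apply Q (hF.pderiv _),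
    adjointFrechet_eq_sum_range (hF.pderiv _)]
  rw [sum_comm]
  refine sum_congr rfl fun k _ => ?_
  rw [sum_comm]
  exact sum_congr rfl fun m _ => sum_congr rfl fun n _ => by rw [pderiv_pderiv_comm]

lemma evolDeriv_euler (Q : Fin l → Pi0 l) (j : Fin l) (F : Pi0 l) :
    evolDeriv Q (euler j F) = ∑ k, adjointFrechet j (euler k F) (Q k) := by
  obtain ⟨N, hN⟩ := exists_diffOrderLT F
  rw [evolDeriv_euler_eq_sum Q hN]
  refine sum_congr rfl fun k _ => ?_
  simp only [euler_eq_sum_range hN, map_sum, LinearMap.sum_apply, adjointFrechet_neg_D_pow]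

lemma euler_evolDeriv (Q : Fin l → Pi0 l) (j : Fin l) (F : Pi0 l) :
    euler j (evolDeriv Q F)
      = evolDeriv Q (euler j F) + ∑ k, adjointFrechet j (Q k) (euler k F) := by
  obtain ⟨N, hN⟩ := exists_diffOrderLT F
  rw [evolDeriv_apply Q hN, evolDeriv_euler_eq_sum Q hN]
  simp only [map_sum, euler_mul, sum_add_distrib, adjointFrechet_D_pow, euler_eq_sum_range hN]

variable {c : Matrix (Fin l) (Fin l) ℂ}

lemma sum_adjointFrechet_pa_vard (hc : c.IsSymm) (j : Fin l) (P R : Pi0 l) :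
    ∑ k, adjointFrechet j (pa l (vard c k P)) (euler k R)
      = -∑ k, adjointFrechet j (euler k P) (pa l (vard c k R)) := by
  simp only [adjointFrechet_pa, vard_eq_sum_euler, map_sum, map_smul, LinearMap.sum_apply,
    LinearMap.smul_apply, map_neg, Derivation.map_smul]
  rw [sum_comm, ← sum_neg_distrib]
  refine sum_congr rfl fun k _ => ?_
  rw [← sum_neg_distrib]
  exact sum_congr rfl fun j _ => by rw [smul_neg, hc.apply k j]

lemma vard_xic (hc : c.IsSymm) (i : Fin l) (P R : Pi0 l) :
    vard c i (xic c P R) = xic c P (vard c i R) - xic c R (vard c i P) := by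
  rw [xic_eq_evolDeriv, xic_eq_evolDeriv, vard_eq_sum_euler c i (evolDeriv _ R),
    vard_eq_sum_euler c i R, vard_eq_sum_euler c i P]
  simp only [euler_evolDeriv, map_sum, Derivation.map_smul, evolDeriv_euler,
    sum_adjointFrechet_pa_vard hc, smul_add, smul_neg, sum_add_distrib, sum_neg_distrib,
    sub_eq_add_neg]

lemma xic_xic_sub_xic_xic (hc : c.IsSymm) (P R S : Pi0 l) :
    xic c P (xic c R S) - xic c R (xic c P S) = xic c (xic c P R) S :=
  derivation_commutator_apply_eq (fun p => by
    rw [xic_X, xic_X, xic_X, xic_D_pow, xic_D_pow, ← map_sub, vard_xic hc]) S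

lemma evolDeriv_sub_sum_mul_euler_mem_range (Q : Fin l → Pi0 l) (F : Pi0 l) :
    evolDeriv Q F - ∑ k, Q k * euler k F ∈ LinearMap.range (D l) := by
  obtain ⟨N, hN⟩ := exists_diffOrderLT F
  simp only [evolDeriv_apply Q hN, euler_eq_sum_range hN, mul_sum, ← sum_sub_distrib]
  refine sum_mem fun k _ => sum_mem fun m _ => ?_
  rw [mul_comm (Q k)]
  exact (pa l).mul_pow_apply_sub_mem_range m _ _

lemma xic_add_xic_mem_range (hc : c.IsSymm) (P R : Pi0 l) :
    xic c P R + xic c R P ∈ LinearMap.range (D l) := by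
  have hPR := evolDeriv_sub_sum_mul_euler_mem_range (fun k => pa l (vard c k P)) R
  have hRP := evolDeriv_sub_sum_mul_euler_mem_range (fun k => pa l (vard c k R)) P
  rw [← xic_eq_evolDeriv] at hPR hRP
  have hsymm : ∑ k, pa l (vard c k R) * euler k P = ∑ k, vard c k P * pa l (euler k R) := by
    simp only [vard_eq_sum_euler, map_sum, Derivation.map_smul, sum_mul, smul_mul_assoc]
    rw [sum_comm]
    exact sum_congr rfl fun k _ => sum_congr rfl fun j _ => by rw [hc.apply k j, mul_comm]
  have hsplit : xic c P R + xic c R P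
      = (xic c P R - ∑ k, pa l (vard c k P) * euler k R)
        + (xic c R P - ∑ k, pa l (vard c k R) * euler k P)
        + pa l (∑ k, vard c k P * euler k R) := by
    simp only [map_sum, Derivation.leibniz, smul_eq_mul, sum_add_distrib, hsymm,
      mul_comm (euler _ R)]
    ring
  rw [hsplit]
  exact add_mem (add_mem hPR hRP) (LinearMap.mem_range_self _ _)

lemma Fzsub_le_ker_euler (j : Fin l) : Fzsub l ≤ LinearMap.ker (euler j) :=
  sup_le (LinearMap.range_le_ker_iff.mpr (LinearMap.ext (euler_pa j)))
    ((Submodule.span_singleton_le_iff_mem _ _).mpr (euler_one j))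

lemma xic_eq_zero_of_mem_Fzsub (c : Matrix (Fin l) (Fin l) ℂ) {P : Pi0 l} (hP : P ∈ Fzsub l) :
    xic c P = 0 :=
  derivation_ext fun p => by
    simp only [xic_X, vard_eq_sum_euler, LinearMap.mem_ker.mp (Fzsub_le_ker_euler _ hP),
      smul_zero, sum_const_zero, map_zero, Derivation.zero_apply]

lemma Fzsub_le_comap_xic (c : Matrix (Fin l) (Fin l) ℂ) (P : Pi0 l) :
    Fzsub l ≤ (Fzsub l).comap (xic c P).toLinearMap := by
  refine sup_le (fun _ ⟨F, hF⟩ => ?_) ((Submodule.span_singleton_le_iff_mem _ _).mpr ?_)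
  · rw [Submodule.mem_comap, ← hF, Derivation.coeFn_coe, Derivation.coeFn_coe, xic_pa]
    exact le_sup_left (a := LinearMap.range (D l)) (LinearMap.mem_range_self _ _)
  · rw [Submodule.mem_comap, Derivation.coeFn_coe, Derivation.map_one_eq_zero]
    exact zero_mem _

lemma xic_add (c : Matrix (Fin l) (Fin l) ℂ) (P P' : Pi0 l) :
    xic c (P + P') = xic c P + xic c P' :=
  derivation_ext fun p => by
    simp only [Derivation.add_apply, xic_X, vard_eq_sum_euler, map_add, smul_add, sum_add_distrib]

lemma xic_smul (c : Matrix (Fin l) (Fin l) ℂ) (t : ℂ) (P : Pi0 l) :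
    xic c (t • P) = t • xic c P :=
  derivation_ext fun p => by
    simp only [Derivation.smul_apply, xic_X, vard_eq_sum_euler, map_smul, smul_comm _ t,
      ← smul_sum]

def xicBilin (c : Matrix (Fin l) (Fin l) ℂ) : Pi0 l →ₗ[ℂ] Pi0 l →ₗ[ℂ] Pi0 l :=
  LinearMap.mk₂ ℂ (fun P R => xic c P R) (fun P P' R => by rw [xic_add]; rfl)
    (fun t P R => by rw [xic_smul]; rfl) (fun P => map_add (xic c P))
    (fun t P => (xic c P).map_smul t)

def bracket (c : Matrix (Fin l) (Fin l) ℂ) : Fz l →ₗ[ℂ] Fz l →ₗ[ℂ] Fz l :=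
  LinearMap.liftQ₂ (Fzsub l) (Fzsub l) ((xicBilin c).compr₂ (Fzsub l).mkQ)
    (fun P hP => LinearMap.ext fun R => by simp [xicBilin, xic_eq_zero_of_mem_Fzsub c hP])
    (fun R hR => LinearMap.ext fun P =>
      (Submodule.Quotient.mk_eq_zero _).mpr (Fzsub_le_comap_xic c P hR))

lemma bracket_mkQ (c : Matrix (Fin l) (Fin l) ℂ) (P R : Pi0 l) :
    bracket c ((Fzsub l).mkQ P) ((Fzsub l).mkQ R) = (Fzsub l).mkQ (xic c P R) := rfl

lemma bracket_skew (hc : c.IsSymm) (x y : Fz l) : bracket c x y = -bracket c y x := by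
  obtain ⟨P, rfl⟩ := (Fzsub l).mkQ_surjective x
  obtain ⟨R, rfl⟩ := (Fzsub l).mkQ_surjective y
  rw [bracket_mkQ, bracket_mkQ, eq_neg_iff_add_eq_zero, ← map_add, Submodule.mkQ_apply,
    Submodule.Quotient.mk_eq_zero]
  exact le_sup_left (a := LinearMap.range (D l)) (xic_add_xic_mem_range hc P R)

lemma leibniz_bracket (hc : c.IsSymm) (x y z : Fz l) :
    bracket c x (bracket c y z) = bracket c (bracket c x y) z + bracket c y (bracket c x z) := by
  obtain ⟨P, rfl⟩ := (Fzsub l).mkQ_surjective x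
  obtain ⟨R, rfl⟩ := (Fzsub l).mkQ_surjective y
  obtain ⟨S, rfl⟩ := (Fzsub l).mkQ_surjective z
  simp only [bracket_mkQ, ← map_add, ← xic_xic_sub_xic_xic hc, sub_add_cancel]

lemma eq_bracket_of_mkQ (c : Matrix (Fin l) (Fin l) ℂ) {br : Fz l →ₗ[ℂ] Fz l →ₗ[ℂ] Fz l}
    (h : ∀ P R, br ((Fzsub l).mkQ P) ((Fzsub l).mkQ R) = (Fzsub l).mkQ (xic c P R)) :
    br = bracket c :=
  Submodule.linearMap_qext _ (LinearMap.ext fun P =>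
    Submodule.linearMap_qext _ (LinearMap.ext fun R => h P R))

end LocalFunctional

open LocalFunctional

theorem unique_lie_structure_on_local_functionals_general (l : ℕ)
    (c : Matrix (Fin l) (Fin l) ℂ) (hc : c.IsSymm) :
    ∃! br : Fz l →ₗ[ℂ] Fz l →ₗ[ℂ] Fz l,
      (∀ P R : Pi0 l,
        br (Submodule.mkQ (Fzsub l) P) (Submodule.mkQ (Fzsub l) R)
          = Submodule.mkQ (Fzsub l) (xic c P R)) ∧
      (∀ x y : Fz l, br x y = - br y x) ∧
      (∀ x y z : Fz l, br x (br y z) = br (br x y) z + br y (br x z)) :=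
  ⟨bracket c, ⟨bracket_mkQ c, bracket_skew hc, leibniz_bracket hc⟩,
    fun _ h => eq_bracket_of_mkQ c h.1⟩

/-- there is a unique Lie algebra structure on `F₀ = π₀/(∂π₀ + ℂ·1)` whose
bracket satisfies `{[P],[R]} = [ξ_P(R)]`; in particular the bracket is well defined,
antisymmetric and satisfies the Jacobi identity. -/
theorem unique_lie_structure_on_local_functionals (l : ℕ) (hl : 1 ≤ l)
    (c : Matrix (Fin l) (Fin l) ℂ) (hc : c.IsSymm) :
    ∃! br : Fz l →ₗ[ℂ] Fz l →ₗ[ℂ] Fz l,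
      (∀ P R : Pi0 l,
        br (Submodule.mkQ (Fzsub l) P) (Submodule.mkQ (Fzsub l) R)
          = Submodule.mkQ (Fzsub l) (xic c P R)) ∧
      (∀ x y : Fz l, br x y = - br y x) ∧
      (∀ x y z : Fz l, br x (br y z) = br (br x y) z + br y (br x z)) :=
  unique_lie_structure_on_local_functionals_general l c hc
end
end

section
/- For every weight vector λ = (λ_0, …, λ_l) ∈ ℂ^{l+1}, set w_λ := ∑_{i=0}^l λ_i u_i^{(0)} ∈ π₀ and define operators on π₀: the twisted derivative ∂_λ(R) := ∂R + w_λ·R, and, for P ∈ π₀, the extended hamiltonian vector field ξ_P^λ(R) := ξ_P(R) + (∑_{i=0}^l λ_i δ_i P)·R. Then for every P ∈ π₀, ξ_P^λ commutes with the twisted derivative: ξ_P^λ ∘ ∂_λ = ∂_λ ∘ ξ_P^λ. (Consequently each quotient F_λ = π₀ / ∂_λ(π₀) is a module over the Lie algebra F₀ of local functionals.) -/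
open MvPolynomial

noncomputable section

namespace AffineGCM

variable {l : ℕ} (K : AffineGCM l)

/-- The variational derivative `δ_i P := ∑_{j=1}^l (α_i,α_j) ∑_{n ≥ 0} (-∂)^n (∂P/∂u_j^{(n)})`. -/
def varder (i : Fin (l+1)) (P : Pi0 l) : Pi0 l :=
  ∑ j : Fin l, K.B i j.succ •
    ∑ᶠ n : ℕ, ((-(pa l).toLinearMap) ^ n) (pderiv (j, n) P)

/-- The hamiltonian vector field `ξ_P`: the unique `ℂ`-derivation of `π₀` with
`ξ_P u_i^{(n)} = ∂^{n+1}(δ_i P)`. -/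
def xi (P : Pi0 l) : Derivation ℂ (Pi0 l) (Pi0 l) :=
  mkDerivation ℂ (fun p => ((pa l).toLinearMap ^ (p.2 + 1)) (K.varder p.1.succ P))

end AffineGCM

/-!
Both sides are first-order operators, and `[ξ_P + s, ∂ + w] = [ξ_P, ∂] + ξ_P(w) - ∂(s)` for
multiplication operators `s = ∑ λ_i δ_i P`, `w = w_λ`. The derivations `ξ_P` and `∂` commute since
they commute on the generators: `ξ_P ∂ u_i^{(n)} = ∂^{n+2} δ_i P = ∂ ξ_P u_i^{(n)}`. Moreover
`ξ_P u_i^{(0)} = ∂ δ_i P` also for `i = 0`: the null vector `(a_j)` of the Cartan matrix expresses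
`δ_0` through `δ_1, …, δ_l` with the same coefficients that express `u_0` through `u_1, …, u_l`.
Hence `ξ_P(w) = ∂(s)`.
-/

theorem Derivation.add_mul_commute_of_commute {R A : Type*} [CommSemiring R] [CommRing A]
    [Algebra R A] (D E : Derivation R A A) (hDE : ∀ a, D (E a) = E (D a)) {s w : A}
    (hw : D w = E s) (a : A) :
    D (E a + w * a) + s * (E a + w * a) = E (D a + s * a) + w * (D a + s * a) := by
  simp only [map_add, Derivation.leibniz, smul_eq_mul, hDE, hw]
  ring

namespace AffineGCM

variable {l : ℕ} (K : AffineGCM l)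

theorem B_eq_d_mul_A_swap (i j : Fin (l+1)) : K.B i j = K.d j * K.A j i := by
  have h : ((K.d i * K.A i j : ℚ) : ℂ) = ((K.d j * K.A j i : ℚ) : ℂ) := congrArg _ (K.dsymm i j)
  push_cast at h
  exact h

theorem sum_label_mul_B (j : Fin (l+1)) : ∑ i, (K.label i : ℂ) * K.B i j = 0 := by
  calc ∑ i, (K.label i : ℂ) * K.B i j
      = K.d j * ((∑ i, (K.label i : ℤ) * K.A j i : ℤ) : ℂ) := by
        push_cast
        rw [Finset.mul_sum]
        refine Finset.sum_congr rfl fun i _ => ?_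
        rw [B_eq_d_mul_A_swap]
        ring
    _ = 0 := by simp [K.null j]

theorem B_zero_left (j : Fin (l+1)) :
    K.B 0 j = -(1 / (K.label 0 : ℂ)) * ∑ i : Fin l, (K.label i.succ : ℂ) * K.B i.succ j := by
  have h := K.sum_label_mul_B j
  rw [Fin.sum_univ_succ] at h
  have : (K.label 0 : ℂ) ≠ 0 := Nat.cast_ne_zero.mpr (K.label_pos 0).ne'
  field_simp
  linear_combination h

theorem varder_zero (P : Pi0 l) :
    K.varder 0 P
      = -(1 / (K.label 0 : ℂ)) • ∑ i : Fin l, (K.label i.succ : ℂ) • K.varder i.succ P := by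
  simp only [varder, Finset.smul_sum, smul_smul]
  rw [Finset.sum_comm]
  refine Finset.sum_congr rfl fun j _ => ?_
  rw [← Finset.sum_smul, B_zero_left, Finset.mul_sum]

theorem pa_X (i : Fin l) (n : ℕ) : pa l (X (i, n)) = X (i, n + 1) :=
  mkDerivation_X ℂ _ _

theorem xi_X (P : Pi0 l) (i : Fin l) (n : ℕ) :
    K.xi P (X (i, n)) = ((pa l).toLinearMap ^ (n + 1)) (K.varder i.succ P) :=
  mkDerivation_X ℂ _ _

theorem xi_pa (P R : Pi0 l) : K.xi P (pa l R) = pa l (K.xi P R) := by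
  have h : ⁅K.xi P, pa l⁆ = 0 := by
    refine MvPolynomial.derivation_ext fun ⟨i, n⟩ => ?_
    rw [Derivation.commutator_apply, Derivation.zero_apply, sub_eq_zero, pa_X, xi_X, xi_X,
      pow_succ' _ (n + 1), Module.End.mul_apply]
    rfl
  simpa [Derivation.commutator_apply, sub_eq_zero] using congrArg (· R) h

theorem xi_Uv_zero (P : Pi0 l) (j : Fin (l+1)) : K.xi P (K.Uv j 0) = pa l (K.varder j P) := by
  have h_succ (i : Fin l) : K.xi P (u i 0) = pa l (K.varder i.succ P) := by
    rw [u, xi_X, pow_one]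
    rfl
  induction j using Fin.cases with
  | zero =>
    simp only [Uv, Fin.cases_zero, varder_zero, Derivation.map_smul, map_sum, h_succ]
  | succ i => exact h_succ i

end AffineGCM

theorem extended_xi_commutes_with_twisted_derivative_general (l : ℕ)
    (K : AffineGCM l) (lam : Fin (l+1) → ℂ) (P : Pi0 l) (R : Pi0 l) :
    K.xi P (pa l R + (∑ i, lam i • K.Uv i 0) * R)
        + (∑ i, lam i • K.varder i P) * (pa l R + (∑ i, lam i • K.Uv i 0) * R)
      = pa l (K.xi P R + (∑ i, lam i • K.varder i P) * R)
        + (∑ i, lam i • K.Uv i 0) * (K.xi P R + (∑ i, lam i • K.varder i P) * R) := by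
  refine Derivation.add_mul_commute_of_commute _ _ (K.xi_pa P) ?_ R
  simp only [map_sum, Derivation.map_smul, K.xi_Uv_zero]

/-- for any weight `λ ∈ ℂ^{l+1}`, with `w_λ = ∑ λ_i u_i^{(0)}`, the extended
hamiltonian vector field `ξ_P^λ(R) = ξ_P(R) + (∑ λ_i δ_i P)·R` commutes with the twisted
derivative `∂_λ(R) = ∂R + w_λ·R`. -/
theorem extended_xi_commutes_with_twisted_derivative (l : ℕ) (hl : 1 ≤ l)
    (K : AffineGCM l) (lam : Fin (l+1) → ℂ) (P : Pi0 l) (R : Pi0 l) :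
    K.xi P (pa l R + (∑ i, lam i • K.Uv i 0) * R)
        + (∑ i, lam i • K.varder i P) * (pa l R + (∑ i, lam i • K.Uv i 0) * R)
      = pa l (K.xi P R + (∑ i, lam i • K.varder i P) * R)
        + (∑ i, lam i • K.Uv i 0) * (K.xi P R + (∑ i, lam i • K.varder i P) * R) :=
  extended_xi_commutes_with_twisted_derivative_general l K lam P R
end
end

section
/- The map L is injective, and Ω¹ decomposes as the direct sum of ℂ-vector subspaces Ω¹ = L(Ω¹) ⊕ (⊕_{i=1}^l π₀·e_i^{(0)}): every ω ∈ Ω¹ can be written uniquely as ω = L(ξ) + ∑_{i=1}^l Y_i·e_i^{(0)} with ξ ∈ Ω¹ and Y_1, …, Y_l ∈ π₀. (Every element of Ω¹_∂ = Ω¹/L(Ω¹) is uniquely represented in the form ∑_i Y_i du_i^{(0)}.) -/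
open MvPolynomial

noncomputable section

/-- The module of one-forms: the free `π₀`-module with basis `e_i^{(n)} = du_i^{(n)}`,
realized as finitely supported functions `(Fin l × ℕ) →₀ π₀`. -/
abbrev Omega1 (l : ℕ) : Type := (Fin l × ℕ) →₀ Pi0 l

/-- The Lie derivative along `∂`: the unique `ℂ`-linear map with
`L(f·e_i^{(n)}) = (∂f)·e_i^{(n)} + f·e_i^{(n+1)}`. -/
def LieD (l : ℕ) : Omega1 l →ₗ[ℂ] Omega1 l :=
  Finsupp.lsum ℂ (fun p =>
    (Finsupp.lsingle p).comp (pa l).toLinearMap + Finsupp.lsingle (p.1, p.2 + 1))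

/-! The proof only uses that `∂` is additive: for any linear `D`, the map
`L ξ = D ξ + shift ξ` raises the top level of the support of `ξ` by one and has the same
leading coefficient there, so `L ξ` cannot be concentrated in level `0` unless `ξ = 0`.
Conversely `f·e_i^{(n+1)} = L(f·e_i^{(n)}) - (D f)·e_i^{(n)}`, so by induction on `n`
every form is `L ξ` plus a level-`0` form. -/

open Finsupp

section

variable {R M ι : Type*} [Ring R] [AddCommGroup M] [Module R M]

def levelShift (p : ι × ℕ) : ι × ℕ := (p.1, p.2 + 1)

lemma levelShift_injective : Function.Injective (levelShift (ι := ι)) := by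
  rintro ⟨i, n⟩ ⟨j, m⟩ h
  simp_all [levelShift]

def mapRangeAddShift (D : M →ₗ[R] M) : (ι × ℕ →₀ M) →ₗ[R] (ι × ℕ →₀ M) :=
  mapRange.linearMap D + lmapDomain M R levelShift

variable (D : M →ₗ[R] M)

lemma mapRangeAddShift_single (p : ι × ℕ) (m : M) :
    mapRangeAddShift D (single p m) = single p (D m) + single (levelShift p) m := by
  simp [mapRangeAddShift]

lemma mapRangeAddShift_apply_succ (ξ : ι × ℕ →₀ M) (j : ι) (n : ℕ) :
    mapRangeAddShift D ξ (j, n + 1) = D (ξ (j, n + 1)) + ξ (j, n) := by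
  simp [mapRangeAddShift, ← mapDomain_apply levelShift_injective ξ (j, n), levelShift]

lemma eq_zero_of_mapRangeAddShift_apply_succ_eq_zero {ξ : ι × ℕ →₀ M}
    (h : ∀ j n, mapRangeAddShift D ξ (j, n + 1) = 0) : ξ = 0 := by
  by_contra hξ
  obtain ⟨⟨j, n⟩, hjn, htop⟩ :=
    ξ.support.exists_max_image Prod.snd (support_nonempty_iff.2 hξ)
  have hnext : ξ (j, n + 1) = 0 :=
    notMem_support_iff.1 fun hmem => by simpa using htop _ hmem
  have hleading := h j n
  rw [mapRangeAddShift_apply_succ, hnext, map_zero, zero_add] at hleading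
  exact mem_support_iff.1 hjn hleading

variable [Fintype ι]

variable (R ι) in
def levelZero : (ι → M) →ₗ[R] (ι × ℕ →₀ M) :=
  ∑ i, (lsingle (i, 0)).comp (LinearMap.proj i)

lemma levelZero_apply (Y : ι → M) : levelZero R ι Y = ∑ i, single (i, 0) (Y i) := by
  simp [levelZero]

lemma levelZero_apply_zero (Y : ι → M) (j : ι) : levelZero R ι Y (j, 0) = Y j := by
  classical
  simp [levelZero_apply, single_apply]

lemma levelZero_apply_succ (Y : ι → M) (j : ι) (n : ℕ) : levelZero R ι Y (j, n + 1) = 0 := by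
  simp [levelZero_apply]

lemma mapRangeAddShift_coprod_levelZero_injective :
    Function.Injective ((mapRangeAddShift D).coprod (levelZero R ι)) := by
  rw [injective_iff_map_eq_zero]
  rintro ⟨ξ, Y⟩ h
  have hcoeff : ∀ q, mapRangeAddShift D ξ q + levelZero R ι Y q = 0 := fun q => by
    simpa using congrArg (· q) h
  have hξ : ξ = 0 := eq_zero_of_mapRangeAddShift_apply_succ_eq_zero D fun j n => by
    simpa [levelZero_apply_succ] using hcoeff (j, n + 1)
  subst hξ
  refine Prod.ext rfl (funext fun j => ?_)
  simpa [levelZero_apply_zero] using hcoeff (j, 0)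

lemma single_mem_range_mapRangeAddShift_coprod_levelZero (i : ι) (n : ℕ) (m : M) :
    single (i, n) m ∈ LinearMap.range ((mapRangeAddShift D).coprod (levelZero R ι)) := by
  induction n generalizing m with
  | zero =>
    classical
    refine LinearMap.mem_range.2 ⟨(0, Pi.single i m), ?_⟩
    rw [LinearMap.coprod_apply, map_zero, zero_add, levelZero_apply,
      Fintype.sum_eq_single i fun j hj => by simp [hj]]
    simp
  | succ n ih =>
    have hL : mapRangeAddShift D (single (i, n) m) ∈
        LinearMap.range ((mapRangeAddShift D).coprod (levelZero R ι)) :=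
      ⟨(single (i, n) m, 0), by simp⟩
    have hsplit : single (i, n + 1) m =
        mapRangeAddShift D (single (i, n) m) - single (i, n) (D m) := by
      rw [mapRangeAddShift_single, add_sub_cancel_left]
      rfl
    rw [hsplit]
    exact sub_mem hL (ih _)

lemma mapRangeAddShift_coprod_levelZero_surjective :
    Function.Surjective ((mapRangeAddShift D).coprod (levelZero R ι)) := by
  refine LinearMap.range_eq_top.1 (Submodule.eq_top_iff'.2 fun ω => ?_)
  induction ω using Finsupp.induction_linear with
  | zero => exact Submodule.zero_mem _
  | add f g hf hg => exact Submodule.add_mem _ hf hg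
  | single p m => exact single_mem_range_mapRangeAddShift_coprod_levelZero D p.1 p.2 m

end

lemma lieD_eq_mapRangeAddShift (l : ℕ) : LieD l = mapRangeAddShift (pa l).toLinearMap := by
  refine lhom_ext fun p f => ?_
  simp [LieD, mapRangeAddShift_single, levelShift]

theorem omega1_decomposition_general (l : ℕ) :
    Function.Injective (LieD l) ∧
    ∀ ω : Omega1 l, ∃! p : Omega1 l × (Fin l → Pi0 l),
      ω = LieD l p.1 + ∑ i : Fin l, Finsupp.single (i, 0) (p.2 i) := by
  set Φ := (mapRangeAddShift (pa l).toLinearMap).coprod (levelZero ℂ (Fin l))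
  have hΦ : Function.Bijective Φ := ⟨mapRangeAddShift_coprod_levelZero_injective _,
    mapRangeAddShift_coprod_levelZero_surjective _⟩
  rw [lieD_eq_mapRangeAddShift]
  refine ⟨fun ξ ξ' h => congrArg Prod.fst (hΦ.1 (a₁ := (ξ, 0)) (a₂ := (ξ', 0)) ?_),
    fun ω => ?_⟩
  · simpa [Φ] using h
  · simpa [Φ, levelZero_apply, eq_comm] using hΦ.existsUnique ω

/-- `L` is injective and `Ω¹ = L(Ω¹) ⊕ (⊕_{i=1}^l π₀·e_i^{(0)})`: every
`ω ∈ Ω¹` is uniquely `ω = L(ξ) + ∑_i Y_i·e_i^{(0)}` with `ξ ∈ Ω¹`, `Y_i ∈ π₀`. -/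
theorem omega1_decomposition (l : ℕ) (hl : 1 ≤ l) :
    Function.Injective (LieD l) ∧
    ∀ ω : Omega1 l, ∃! p : Omega1 l × (Fin l → Pi0 l),
      ω = LieD l p.1 + ∑ i : Fin l, Finsupp.single (i, 0) (p.2 i) :=
  omega1_decomposition_general l
end
end
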